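/- arXiv:2012.13372 — 2 statements merged into one kernel-verified Lean document; each statement's English description precedes it below -/
import Mathlib

section
/- Let V be a nonzero finite-dimensional vector space over an algebraically closed field K of characteristic zero and φ ∈ End(V). If the endomorphism ad(φ): End(V) → End(V), g ↦ φ∘g − g∘φ, is semisimple (diagonalizable) with all eigenvalues in ℤ, then φ is semisimple (diagonalizable). -/
open Polynomial LinearMap Module

/-- A diagonalizable endomorphism of a finite-dimensional space is semisimple. -/
lemma aux_diag_isSemisimple {K V : Type*} [Field K] [AddCommGroup V] [Module K V]
    [FiniteDimensional K V] (f : Module.End K V)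
    (h : (⨆ μ : K, f.eigenspace μ) = ⊤) : f.IsSemisimple := by
  classical
  set t : Finset K := (minpoly K f).roots.toFinset with ht
  have hsep : (∏ μ ∈ t, (X - C μ)).Separable := by
    rw [separable_prod_X_sub_C_iff']
    exact fun x _ y _ hxy => hxy
  refine Module.End.isSemisimple_of_squarefree_aeval_eq_zero hsep.squarefree ?_
  have hker : (⨆ μ : K, f.eigenspace μ) ≤ LinearMap.ker (aeval f (∏ μ ∈ t, (X - C μ))) := by
    refine iSup_le fun μ v hv => ?_
    rcases eq_or_ne v 0 with rfl | hv0
    · simp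
    · have hμ : μ ∈ t := by
        rw [ht, Multiset.mem_toFinset, mem_roots']
        exact ⟨minpoly.ne_zero_of_finite K f,
          Module.End.hasEigenvalue_iff_isRoot.mp
            (Module.End.hasEigenvalue_of_hasEigenvector ⟨hv, hv0⟩)⟩
      rw [LinearMap.mem_ker, ← Finset.prod_erase_mul _ _ hμ, map_mul, Module.End.mul_apply]
      have h0 : (aeval f (X - C μ)) v = 0 := by
        rw [map_sub, aeval_X, aeval_C]
        simp [Module.End.mem_eigenspace_iff.mp hv, Module.algebraMap_end_apply]
      rw [h0, map_zero]
  exact LinearMap.ext fun v => by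
    simpa using LinearMap.mem_ker.mp (hker (h.symm ▸ Submodule.mem_top))

lemma aux_aeval_mulLeft {K A : Type*} [CommSemiring K] [Ring A] [Algebra K A]
    (s : A) (p : K[X]) (g : A) :
    (aeval (LinearMap.mulLeft K s) p) g = (aeval s p) * g := by
  induction p using Polynomial.induction_on' with
  | add p q hp hq => simp [hp, hq, add_mul]
  | monomial n c =>
      simp [aeval_monomial, Algebra.algebraMap_eq_smul_one, LinearMap.pow_mulLeft,
        LinearMap.smul_apply, Module.End.mul_apply, smul_mul_assoc]

lemma aux_aeval_mulRight {K A : Type*} [CommSemiring K] [Ring A] [Algebra K A]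
    (s : A) (p : K[X]) (g : A) :
    (aeval (LinearMap.mulRight K s) p) g = g * (aeval s p) := by
  induction p using Polynomial.induction_on' with
  | add p q hp hq => simp [hp, hq, mul_add]
  | monomial n c =>
      simp [aeval_monomial, Algebra.algebraMap_eq_smul_one, LinearMap.pow_mulRight,
        LinearMap.smul_apply, Module.End.mul_apply, mul_smul_comm]

/-- If `ad(φ)` is diagonalizable with integer eigenvalues, then `φ` is diagonalizable. -/
theorem stmt4 {K V : Type*} [Field K] [IsAlgClosed K] [CharZero K]
    [AddCommGroup V] [Module K V] [FiniteDimensional K V] [Nontrivial V]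
    (φ : Module.End K V) (T : Module.End K (Module.End K V))
    (hT : ∀ g : Module.End K V, T g = φ * g - g * φ)
    (hdiag : (⨆ μ : K, T.eigenspace μ) = ⊤)
    (hint : ∀ μ : K, T.HasEigenvalue μ → ∃ n : ℤ, μ = (n : K)) :
    (⨆ μ : K, φ.eigenspace μ) = ⊤ := by
  classical
  -- T is semisimple
  have hTss : T.IsSemisimple := aux_diag_isSemisimple T hdiag
  -- Jordan–Chevalley decomposition of φ
  obtain ⟨n, hn_mem, s, hs_mem, hn_nil, hs_ss, hφ⟩ :=
    Module.End.exists_isNilpotent_isSemisimple (f := φ)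
  have hcomm : Commute φ s := Algebra.commute_of_mem_adjoin_self hs_mem
  -- ad s is semisimple
  have hLs : Module.End.IsSemisimple (LinearMap.mulLeft K s) :=
    Module.End.isSemisimple_of_squarefree_aeval_eq_zero hs_ss.minpoly_squarefree
      (LinearMap.ext fun g => by rw [aux_aeval_mulLeft, minpoly.aeval]; simp)
  have hRs : Module.End.IsSemisimple (LinearMap.mulRight K s) :=
    Module.End.isSemisimple_of_squarefree_aeval_eq_zero hs_ss.minpoly_squarefree
      (LinearMap.ext fun g => by rw [aux_aeval_mulRight, minpoly.aeval]; simp)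
  have hcomm_lr : Commute (LinearMap.mulLeft K s) (LinearMap.mulRight K s) :=
    LinearMap.commute_mulLeft_right s s
  have hads : Module.End.IsSemisimple (LinearMap.mulLeft K s - LinearMap.mulRight K s) :=
    Module.End.IsSemisimple.sub_of_commute hcomm_lr hLs hRs
  -- T commutes with ad s
  have hTlin : T = LinearMap.mulLeft K φ - LinearMap.mulRight K φ := by
    ext g; simp [hT g]
  have c_ll : Commute (LinearMap.mulLeft K φ) (LinearMap.mulLeft K s) := by
    rw [Commute, SemiconjBy, Module.End.mul_eq_comp, Module.End.mul_eq_comp,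
      ← LinearMap.mulLeft_mul, ← LinearMap.mulLeft_mul, hcomm.eq]
  have c_rr : Commute (LinearMap.mulRight K φ) (LinearMap.mulRight K s) := by
    rw [Commute, SemiconjBy, Module.End.mul_eq_comp, Module.End.mul_eq_comp,
      ← LinearMap.mulRight_mul, ← LinearMap.mulRight_mul, hcomm.eq]
  have hTcomm : Commute T (LinearMap.mulLeft K s - LinearMap.mulRight K s) := by
    rw [hTlin]
    exact (c_ll.sub_right (LinearMap.commute_mulLeft_right φ s)).sub_left
      (((LinearMap.commute_mulLeft_right s φ).symm).sub_right c_rr)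
  -- ad n = T - ad s is nilpotent and semisimple, hence zero
  have hadn_eq : T - (LinearMap.mulLeft K s - LinearMap.mulRight K s)
      = LinearMap.mulLeft K n - LinearMap.mulRight K n := by
    ext g
    simp only [LinearMap.sub_apply, hT g, LinearMap.mulLeft_apply, LinearMap.mulRight_apply, hφ,
      add_mul, mul_add, LinearMap.add_apply, LinearMap.smul_apply, Module.End.mul_apply]
    abel
  have hadn_nil : IsNilpotent (LinearMap.mulLeft K n - LinearMap.mulRight K n) := by
    obtain ⟨k, hk⟩ := hn_nil
    refine Commute.isNilpotent_sub (LinearMap.commute_mulLeft_right n n)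
      ⟨k, ?_⟩ ⟨k, ?_⟩
    · rw [LinearMap.pow_mulLeft, hk]; ext g; simp
    · rw [LinearMap.pow_mulRight, hk]; ext g; simp
  have hadn_ss : Module.End.IsSemisimple (LinearMap.mulLeft K n - LinearMap.mulRight K n) := by
    rw [← hadn_eq]
    exact Module.End.IsSemisimple.sub_of_commute hTcomm hTss hads
  have hadn0 : LinearMap.mulLeft K n - LinearMap.mulRight K n = 0 :=
    Module.End.eq_zero_of_isNilpotent_isSemisimple hadn_nil hadn_ss
  -- n commutes with everything
  have hcen : ∀ g : Module.End K V, n * g = g * n := by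
    intro g
    have := LinearMap.ext_iff.mp hadn0 g
    simpa [sub_eq_zero] using this
  -- hence n is a scalar, and being nilpotent, n = 0
  let B := Basis.ofVectorSpace K V
  obtain ⟨i⟩ : Nonempty (Module.Basis.ofVectorSpaceIndex K V) := B.index_nonempty
  set c : K := B.repr (n (B i)) i with hc
  have hscalar : ∀ w : V, n w = c • w := by
    intro w
    have hg := hcen ((B.coord i).smulRight w)
    have h2 := LinearMap.ext_iff.mp hg (B i)
    simp only [Module.End.mul_apply, LinearMap.smulRight_apply, Basis.coord_apply, B.repr_self,
      Finsupp.single_eq_same, one_smul] at h2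
    exact h2
  have hcpow : c = 0 := by
    obtain ⟨k, hk⟩ := hn_nil
    have hpow : ∀ m : ℕ, (n ^ m) (B i) = c ^ m • B i := by
      intro m
      induction m with
      | zero => simp
      | succ m ih =>
          rw [pow_succ, Module.End.mul_apply, hscalar (B i), map_smul, ih, smul_smul,
            ← pow_succ']
    have := hpow k
    rw [hk] at this
    have hbne : (B i : V) ≠ 0 := B.ne_zero i
    rcases Nat.eq_zero_or_pos k with rfl | hkpos
    · exact absurd (by simpa using this.symm) hbne
    · have hck : c ^ k = 0 := by
        by_contra hck
        exact hbne (by simpa [smul_eq_zero, hck] using this.symm)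
      exact pow_eq_zero_iff hkpos.ne' |>.mp hck
  have hn0 : n = 0 := by
    ext w; simp [hscalar w, hcpow]
  have hφss : φ.IsSemisimple := by
    rw [hφ, hn0, zero_add]; exact hs_ss
  have hfin := hφss.isFinitelySemisimple
  have heq : (⨆ μ : K, φ.maxGenEigenspace μ) = ⨆ μ : K, φ.eigenspace μ :=
    iSup_congr fun μ => hfin.maxGenEigenspace_eq_eigenspace μ
  rw [← heq]
  exact Module.End.iSup_maxGenEigenspace_eq_top φ
end

section
/- Every element of the congruence subgroup 1 + p^d·Mat_d(ℤ_p) ⊆ GL_d(ℤ_p) that is quasi-unipotent (some positive power is unipotent) is itself unipotent, for p a prime and d ≥ 1 (with the usual convention; for p = 2, elements of 1 + 2^d Mat_d(ℤ_2) with d ≥ 2). -/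
open Finset

lemma stmt7_factor {S : Type*} [Ring S] (x : S) (q : ℕ) :
    (1 + x) ^ q - 1 = x * ∑ m ∈ range q, q.choose (m + 1) • x ^ m := by
  rw [add_comm, (Commute.one_right x).add_pow, Finset.sum_range_succ']
  simp only [one_pow, mul_one, pow_zero, Nat.choose_zero_right, Nat.cast_one]
  rw [add_sub_cancel_right, Finset.mul_sum]
  refine Finset.sum_congr rfl fun k hk => ?_
  rw [nsmul_eq_mul, pow_succ', mul_assoc, (Nat.cast_commute _ _).eq]

lemma stmt7_commS {S : Type*} [Ring S] (x : S) (q : ℕ) :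
    Commute x (∑ m ∈ range q, q.choose (m + 1) • x ^ m) := by
  refine Commute.sum_right _ _ _ fun m _ => ?_
  simpa [nsmul_eq_mul] using ((Commute.refl x).pow_right m).mul_left (Nat.commute_cast x _)

lemma stmt7_unit {p : ℕ} [Fact p.Prime] {d : ℕ} (X : Matrix (Fin d) (Fin d) ℤ_[p])
    (h : IsUnit ((PadicInt.toZMod (p := p)).mapMatrix X)) : IsUnit X := by
  rw [Matrix.isUnit_iff_isUnit_det]
  by_contra hc
  have hm : X.det ∈ IsLocalRing.maximalIdeal ℤ_[p] :=
    (IsLocalRing.mem_maximalIdeal _).mpr hc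
  rw [← PadicInt.ker_toZMod, RingHom.mem_ker] at hm
  have h2 := (Matrix.isUnit_iff_isUnit_det _).mp h
  rw [← RingHom.map_det, hm] at h2
  simp at h2

lemma stmt7_cancel {p : ℕ} [Fact p.Prime] {d : ℕ} (e : ℕ) (X : Matrix (Fin d) (Fin d) ℤ_[p])
    (h : p ^ e • X = 0) : X = 0 := by
  ext i j
  have h2 := congrArg (fun M => M i j) h
  simp only [Matrix.smul_apply, Matrix.zero_apply, nsmul_eq_mul] at h2
  have hp : ((p : ℤ_[p]) ^ e) ≠ 0 := pow_ne_zero _ (Nat.cast_ne_zero.mpr (Fact.out (p := p.Prime)).ne_zero)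
  have := mul_eq_zero.mp (by push_cast at h2 ⊢; exact h2)
  simpa [hp] using this

lemma stmt7_pzero {p : ℕ} [Fact p.Prime] {d : ℕ} (Y : Matrix (Fin d) (Fin d) (ZMod p)) :
    p • Y = 0 := by
  rw [nsmul_eq_mul, ← map_natCast (algebraMap (ZMod p) (Matrix (Fin d) (Fin d) (ZMod p))) p,
    ZMod.natCast_self, map_zero, zero_mul]

lemma stmt7_pstep {p : ℕ} [Fact p.Prime] {d : ℕ} (hd : 1 ≤ d) (hpd : 3 ≤ p ^ d)
    (N : Matrix (Fin d) (Fin d) ℤ_[p])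
    (h : ((1 + p ^ d • N) ^ p - 1) ^ d = 0) :
    ((p ^ d • N : Matrix (Fin d) (Fin d) ℤ_[p])) ^ d = 0 := by
  have hp : p.Prime := Fact.out
  have hp2 : 2 ≤ p := hp.two_le
  set A : Matrix (Fin d) (Fin d) ℤ_[p] := p ^ d • N with hA
  set S : Matrix (Fin d) (Fin d) ℤ_[p] := ∑ m ∈ range p, p.choose (m + 1) • A ^ m with hS
  rw [stmt7_factor, ← hS, (stmt7_commS A p).mul_pow] at h
  -- coefficients
  set c : ℕ → ℕ := fun m => p.choose (m + 1) * p ^ (d * m) with hc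
  have hterm : ∀ m, p.choose (m + 1) • A ^ m = c m • N ^ m := by
    intro m
    rw [hA, smul_pow, smul_smul, hc, ← pow_mul]
  -- divisibility: 2 ≤ d * (p-1)
  have hdp : 2 ≤ d * (p - 1) := by
    rcases eq_or_lt_of_le hd with h1 | h1
    · have hp3 : 3 ≤ p := by
        have : p ^ d = p := by rw [← h1, pow_one]
        omega
      rw [← h1, one_mul]; omega
    · have h3 : 1 ≤ p - 1 := by omega
      calc 2 = 2 * 1 := by norm_num
        _ ≤ d * (p - 1) := Nat.mul_le_mul h1 h3
  have hdiv : ∀ m, 1 ≤ m → m ≤ p - 1 → p ^ 2 ∣ c m := by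
    intro m hm1 hm2
    rcases eq_or_lt_of_le (show m + 1 ≤ p by omega) with he | hlt
    · have hm : m = p - 1 := by omega
      rw [hc]; simp only
      rw [he, Nat.choose_self, one_mul]
      exact pow_dvd_pow p (by rw [hm]; exact hdp)
    · rw [hc]; simp only; rw [sq]
      exact mul_dvd_mul (hp.dvd_choose_self (by omega) hlt)
        (dvd_pow_self p (Nat.mul_pos (by omega : 0 < d) (by omega : 0 < m)).ne')
  set e : ℕ → ℕ := fun m => c m / p ^ 2 with he
  set W : Matrix (Fin d) (Fin d) ℤ_[p] := ∑ m ∈ range (p - 1), e (m + 1) • N ^ (m + 1) with hW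
  set U : Matrix (Fin d) (Fin d) ℤ_[p] := 1 + p • W with hU
  have hSU : S = p • U := by
    rw [hS, Finset.sum_congr rfl fun m _ => hterm m]
    have hps : range p = range (p - 1 + 1) := by rw [Nat.sub_add_cancel (by omega : 1 ≤ p)]
    rw [hps, Finset.sum_range_succ']
    have h0 : c 0 • (N ^ 0 : Matrix (Fin d) (Fin d) ℤ_[p]) = p • (1 : Matrix (Fin d) (Fin d) ℤ_[p]) := by
      rw [hc]; simp
    have hterms : ∀ m ∈ range (p - 1),
        c (m + 1) • (N ^ (m + 1) : Matrix (Fin d) (Fin d) ℤ_[p]) = p ^ 2 • (e (m + 1) • N ^ (m + 1)) := by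
      intro m hm
      rw [smul_smul, he]
      simp only
      rw [Nat.mul_div_cancel' (hdiv (m + 1) (by omega) (by have := mem_range.mp hm; omega))]
    rw [Finset.sum_congr rfl hterms, ← Finset.smul_sum, ← hW, h0, hU, smul_add, smul_smul, ← sq,
      add_comm]
  rw [← hS, hSU, smul_pow, smul_pow, smul_mul_assoc, mul_smul_comm, smul_smul,
    show (p ^ d) ^ d * p ^ d = p ^ (d * d + d) by rw [← pow_mul, ← pow_add]] at h
  have h9 := stmt7_cancel (d * d + d) _ h
  have hUunit : IsUnit U := by
    apply stmt7_unit
    rw [hU, map_add, map_one, map_nsmul, stmt7_pzero, add_zero]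
    exact isUnit_one
  obtain ⟨u, hu⟩ := hUunit.pow d
  have hN : N ^ d = 0 := by
    calc N ^ d = N ^ d * ↑u * ↑u⁻¹ := by rw [mul_assoc, Units.mul_inv, mul_one]
      _ = 0 := by rw [hu, h9, zero_mul]
  rw [hA, smul_pow, hN, smul_zero]

lemma stmt7_coprime {p : ℕ} [Fact p.Prime] {d : ℕ} (N : Matrix (Fin d) (Fin d) ℤ_[p]) (hd : 1 ≤ d)
    (q : ℕ) (hq : 1 ≤ q) (hpq : ¬ p ∣ q)
    (h : ((1 + p ^ d • N) ^ q - 1) ^ d = 0) : (p ^ d • N : Matrix (Fin d) (Fin d) ℤ_[p]) ^ d = 0 := by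
  set A : Matrix (Fin d) (Fin d) ℤ_[p] := p ^ d • N with hA
  set S : Matrix (Fin d) (Fin d) ℤ_[p] := ∑ m ∈ range q, q.choose (m + 1) • A ^ m with hS
  rw [stmt7_factor, ← hS, (stmt7_commS A q).mul_pow] at h
  -- S is a unit
  have hΦA : (PadicInt.toZMod (p := p)).mapMatrix A = 0 := by
    rw [hA, map_nsmul]
    have h1 : ((p:ℕ) : Matrix (Fin d) (Fin d) (ZMod p)) = 0 := by
      rw [← map_natCast (algebraMap (ZMod p) (Matrix (Fin d) (Fin d) (ZMod p))) p,
        ZMod.natCast_self, map_zero]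
    calc p ^ d • (PadicInt.toZMod (p := p)).mapMatrix N
        = ((p^d : ℕ) : Matrix (Fin d) (Fin d) (ZMod p)) * _ := by rw [nsmul_eq_mul]
      _ = 0 := by rw [Nat.cast_pow, h1, zero_pow (Nat.one_le_iff_ne_zero.mp hd), zero_mul]
  have hunit : IsUnit S := by
    apply stmt7_unit
    rw [hS, map_sum]
    have : ∀ m ∈ range q, (PadicInt.toZMod (p := p)).mapMatrix (q.choose (m + 1) • A ^ m)
        = q.choose (m + 1) • (0 : Matrix (Fin d) (Fin d) (ZMod p)) ^ m := by
      intro m _; rw [map_nsmul, map_pow, hΦA]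
    rw [Finset.sum_congr rfl this, Finset.sum_eq_single_of_mem 0 (mem_range.mpr hq)
      (fun b _ hb => by rw [zero_pow hb, smul_zero])]
    simp only [pow_zero, Nat.choose_one_right]
    have hu : IsUnit ((q : ℕ) : ZMod p) := by
      rw [ZMod.isUnit_iff_coprime]
      exact ((Fact.out (p := p.Prime)).coprime_iff_not_dvd.mpr hpq).symm
    have := hu.map (algebraMap (ZMod p) (Matrix (Fin d) (Fin d) (ZMod p)))
    rw [map_natCast] at this
    simpa [nsmul_eq_mul] using this
  obtain ⟨u, hu⟩ := hunit.pow d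
  calc A ^ d = A ^ d * u * ↑u⁻¹ := by rw [mul_assoc, Units.mul_inv, mul_one]
    _ = 0 := by rw [hu, h, zero_mul]

lemma stmt7_powshape {p d c : ℕ} [Fact p.Prime] (N : Matrix (Fin d) (Fin d) ℤ_[p]) :
    ∀ m, ∃ K, (1 + c • N) ^ m = 1 + c • K := by
  intro m
  induction m with
  | zero => exact ⟨0, by simp⟩
  | succ m ih =>
    obtain ⟨K, hK⟩ := ih
    refine ⟨K + N + c • (K * N), ?_⟩
    rw [pow_succ, hK]
    simp only [mul_add, add_mul, one_mul, mul_one, smul_mul_assoc, mul_smul_comm, smul_smul,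
      smul_add]
    abel


/-- Every quasi-unipotent element of the congruence subgroup `1 + p^d·Mat_d(ℤ_p)` is unipotent
(assuming `p^d ≥ 3`). -/
theorem stmt7 {p : ℕ} [Fact p.Prime] (d : ℕ) (hd : 1 ≤ d) (hpd : 3 ≤ p ^ d)
    (N M : Matrix (Fin d) (Fin d) ℤ_[p]) (hM : M = 1 + (p : ℤ_[p]) ^ d • N)
    (n : ℕ) (hn : 1 ≤ n) (hqu : (M ^ n - 1) ^ d = 0) :
    (M - 1) ^ d = 0 := by
  have hM' : M = 1 + (p ^ d : ℕ) • N := by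
    rw [hM]
    congr 1
    rw [← Nat.cast_smul_eq_nsmul ℤ_[p], Nat.cast_pow]
  clear hM
  have claim : ∀ n, 1 ≤ n → ∀ (N' M' : Matrix (Fin d) (Fin d) ℤ_[p]),
      M' = 1 + (p ^ d : ℕ) • N' → (M' ^ n - 1) ^ d = 0 → (M' - 1) ^ d = 0 := by
    intro n
    induction n using Nat.strong_induction_on with
    | _ n ih =>
      intro hn N' M' hM' hq
      by_cases hdvd : p ∣ n
      · obtain ⟨m, rfl⟩ := hdvd
        have hp2 : 2 ≤ p := (Fact.out (p := p.Prime)).two_le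
        have hm : 1 ≤ m := by
          rcases Nat.eq_zero_or_pos m with h0 | h0
          · subst h0; simp at hn
          · exact h0
        have hlt : m < p * m := by
          calc m = 1 * m := (one_mul m).symm
            _ < p * m := (Nat.mul_lt_mul_right hm).mpr (by omega)
        obtain ⟨K, hK⟩ := stmt7_powshape (p := p) (c := p ^ d) N' m
        have h1 : ((M' ^ m) ^ p - 1) ^ d = 0 := by
          rw [← pow_mul, mul_comm]; exact hq
        rw [hM', hK] at h1
        have h2 := stmt7_pstep hd hpd K h1
        have h3 : (M' ^ m - 1) ^ d = 0 := by
          rw [hM', hK, add_sub_cancel_left]; exact h2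
        exact ih m hlt hm N' M' hM' h3
      · have h2 := stmt7_coprime N' hd n hn hdvd (by rw [← hM']; exact hq)
        rw [hM', add_sub_cancel_left]
        exact h2
  exact claim n hn N M hM' hqu
end
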